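/- Let F₁, F₂ : A → B be lenses, let E : B → C be a lens with E ∘ F₁ = E ∘ F₂ in Lens, and suppose the get functor U E coequalises U F₁ and U F₂ in Cat. Let G : B → D be a lens with G ∘ F₁ = G ∘ F₂, and let H : C → D be the unique functor with U G = H ∘ U E. Then there is a unique lens structure on H satisfying φ_{H,E B} d = E(φ_{G,B} d) for every object B of B and every morphism d of D with source G B. -/

import Mathlib

universe u

open CategoryTheory CategoryTheory.Limits

namespace LensPaper

section OutDefs

variable {A : Type*} [Category A] {B : Type*} [Category B] {C : Type*} [Category C]

/-- The "out-set" of an object: the collection of all morphisms out of `X`,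
bundled with their targets. -/
def Out (X : A) : Type _ := Σ Y : A, X ⟶ Y

/-- The identity element of an out-set. -/
def Out.id (X : A) : Out X := ⟨X, 𝟙 X⟩

/-- Composition of a morphism out of `X` with a morphism out of its target. -/
def Out.comp {X : A} (u : Out X) (v : Out u.1) : Out X := ⟨v.1, u.2 ≫ v.2⟩

/-- Transport of out-sets along an equality of objects. -/
def Out.cast {X Y : A} (h : X = Y) (u : Out X) : Out Y := ⟨u.1, eqToHom h.symm ≫ u.2⟩

@[simp] theorem Out.cast_rfl {X : A} (u : Out X) : Out.cast rfl u = u := by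
  cases u; simp [Out.cast] <;> rfl

theorem Out.cast_cast {X Y Z : A} (h₁ : X = Y) (h₂ : Y = Z) (u : Out X) :
    Out.cast h₂ (Out.cast h₁ u) = Out.cast (h₁.trans h₂) u := by
  subst h₁; subst h₂; simp

/-- The action of a functor on out-sets. -/
def mapOut (F : A ⥤ B) {X : A} (u : Out X) : Out (F.obj X) := ⟨F.obj u.1, F.map u.2⟩

theorem mapOut_cast (F : A ⥤ B) {X Y : A} (h : X = Y) (u : Out X) :
    mapOut F (Out.cast h u) = Out.cast (congrArg F.obj h) (mapOut F u) := by
  subst h; simp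

/-- The set of all morphisms of a category, bundled with their endpoints. -/
def Mor (A : Type*) [Category A] : Type _ := Σ (X Y : A), X ⟶ Y

/-- The action of a functor on morphisms, as a function on bundled morphisms. -/
def mapMor (F : A ⥤ B) : Mor A → Mor B := fun m => ⟨F.obj m.1, F.obj m.2.1, F.map m.2.2⟩

/-- The set of composable pairs of morphisms of a category. -/
def CompPair (A : Type*) [Category A] : Type _ := Σ (X Y Z : A), (X ⟶ Y) × (Y ⟶ Z)

/-- The action of a functor on composable pairs. -/
def mapCompPair (F : A ⥤ B) : CompPair A → CompPair B :=
  fun p => ⟨F.obj p.1, F.obj p.2.1, F.obj p.2.2.1, (F.map p.2.2.2.1, F.map p.2.2.2.2)⟩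

/-- A functor is a discrete opfibration if every morphism out of `F.obj X`
has a unique lift to a morphism out of `X`. -/
def IsDiscreteOpfibration (F : A ⥤ B) : Prop :=
  ∀ (X : A) (u : Out (F.obj X)), ∃! v : Out X, mapOut F v = u

/-- A cosieve is an injective-on-objects discrete opfibration. -/
def IsCosieve (F : A ⥤ B) : Prop :=
  IsDiscreteOpfibration F ∧ Function.Injective F.obj

end OutDefs

/-- An (asymmetric delta) lens: a get functor together with put functions
satisfying PutGet, PutId and PutPut. -/
structure DLens (A : Type*) (B : Type*) [Category A] [Category B] where
  get : A ⥤ B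
  put : ∀ (X : A), Out (get.obj X) → Out X
  putGet : ∀ (X : A) (u : Out (get.obj X)), mapOut get (put X u) = u
  putId : ∀ (X : A), put X (Out.id (get.obj X)) = Out.id X
  putPut : ∀ (X : A) (u : Out (get.obj X)) (v : Out u.1) (h : u.1 = get.obj (put X u).1),
      put X (u.comp v) = (put X u).comp (put (put X u).1 (Out.cast h v))

namespace DLens

variable {A : Type*} [Category A] {B : Type*} [Category B] {C : Type*} [Category C]

theorem put_cast (F : DLens A B) {X₁ X₂ : A} (e : X₁ = X₂) (u : Out (F.get.obj X₁)) :
    Out.cast e (F.put X₁ u) = F.put X₂ (Out.cast (congrArg F.get.obj e) u) := by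
  subst e; simp

/-- The identity lens. -/
def id (A : Type*) [Category A] : DLens A A where
  get := Functor.id A
  put X u := u
  putGet X u := rfl
  putId X := rfl
  putPut X u v h := by
    have hv : Out.cast h v = v := Out.cast_rfl v
    rw [hv]

/-- Composition of lenses. -/
def comp (F : DLens A B) (G : DLens B C) : DLens A C where
  get := F.get ⋙ G.get
  put X u := F.put X (G.put (F.get.obj X) u)
  putGet X u := by
    show mapOut G.get (mapOut F.get (F.put X (G.put (F.get.obj X) u))) = u
    rw [F.putGet, G.putGet]
  putId X := by
    show F.put X (G.put (F.get.obj X) (Out.id (G.get.obj (F.get.obj X)))) = Out.id X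
    rw [G.putId, F.putId]
  putPut X u v h := by
    have h₁ : u.1 = G.get.obj (G.put (F.get.obj X) u).1 :=
      (congrArg Sigma.fst (G.putGet (F.get.obj X) u)).symm
    show F.put X (G.put (F.get.obj X) (u.comp v)) = _
    rw [G.putPut (F.get.obj X) u v h₁]
    have h₂ : (G.put (F.get.obj X) u).1 =
        F.get.obj (F.put X (G.put (F.get.obj X) u)).1 :=
      (congrArg Sigma.fst (F.putGet X (G.put (F.get.obj X) u))).symm
    rw [F.putPut X (G.put (F.get.obj X) u) _ h₂]
    rw [put_cast G h₂, Out.cast_cast]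

end DLens

/-- The category of small categories and (asymmetric delta) lenses. -/
def LensCat : Type (u + 1) := Cat.{u, u}

/-- Regard a small category as an object of the category of lenses. -/
def LensCat.of (C : Cat.{u, u}) : LensCat.{u} := C

/-- The underlying small category of an object of the category of lenses. -/
def LensCat.toCat (A : LensCat.{u}) : Cat.{u, u} := A

instance : Category.{u} LensCat.{u} where
  Hom A B := DLens A.toCat B.toCat
  id A := DLens.id A.toCat
  comp F G := F.comp G
  id_comp F := rfl
  comp_id F := rfl
  assoc F G H := rfl

/-- The get functor of a lens, i.e. a morphism of `LensCat` regarded as a `DLens`. -/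
def LensCat.get {A B : LensCat.{u}} (F : A ⟶ B) : A.toCat ⟶ B.toCat := (DLens.get F).toCatHom

/-- The identity-on-objects forgetful functor from the category of lenses to the
category of small categories and functors, sending a lens to its get functor. -/
def lensForget : LensCat.{u} ⥤ Cat.{u, u} where
  obj A := A.toCat
  map F := (DLens.get F).toCatHom
  map_id A := rfl
  map_comp F G := rfl

/-!
A coequaliser `e` of `f₁, f₂` in `Cat` is surjective on objects, and `e X = e X'` only when `X`
and `X'` are linked by a zigzag of pairs `(f₁ a, f₂ a)`: test the universal property against
codiscrete categories. Since `F₁ ≫ G = F₂ ≫ G`, the puts of `G` at `F₁ a` and `F₂ a` are the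
images of a single put of `F₁ ≫ G` at `a`, so after applying `E` they agree; along zigzags they
then agree on every fibre of `E`. Hence `φ_{H, E X} := E ∘ φ_{G, X}` is well defined, the lens
laws for it are the images under `E` of those of `G`, and it is unique because `E` is surjective
on objects.
-/

section Out

variable {A : Type*} [Category A] {B : Type*} [Category B]

theorem Out.cast_self {X : A} (h : X = X) (u : Out X) : Out.cast h u = u :=
  Out.cast_rfl u

theorem Out.cast_surjective {X Y : A} (h : X = Y) : Function.Surjective (Out.cast h) :=
  fun u => ⟨Out.cast h.symm u, by rw [Out.cast_cast, Out.cast_self]⟩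

theorem Out.cast_id {X Y : A} (h : X = Y) : Out.cast h (Out.id X) = Out.id Y := by
  subst h; simp

theorem Out.cast_comp {X Y : A} (h : X = Y) (u : Out X) (v : Out u.1) :
    Out.cast h (u.comp v) = (Out.cast h u).comp v :=
  congrArg (Sigma.mk v.1) (Category.assoc _ _ _).symm

theorem mapOut_id (F : A ⥤ B) (X : A) : mapOut F (Out.id X) = Out.id (F.obj X) := by
  rw [mapOut, Out.id, F.map_id]; rfl

theorem mapOut_comp (F : A ⥤ B) {X : A} (u : Out X) (v : Out u.1) :
    mapOut F (u.comp v) = (mapOut F u).comp (mapOut F v) := by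
  rw [mapOut, Out.comp, F.map_comp]; rfl

theorem mapOut_congr {F F' : A ⥤ B} (hF : F = F') {X : A} (u : Out X)
    (h : F.obj X = F'.obj X) : Out.cast h (mapOut F u) = mapOut F' u := by
  subst hF; exact Out.cast_rfl _

end Out

namespace DLens

variable {A : Type*} [Category A] {B : Type*} [Category B]

theorem put_congr {K₁ K₂ : DLens A B} (hK : K₁ = K₂) (X : A) (u : Out (K₁.get.obj X))
    (h : K₁.get.obj X = K₂.get.obj X) : K₁.put X u = K₂.put X (Out.cast h u) := by
  subst hK; rw [Out.cast_self]

theorem ext_put {K₁ K₂ : DLens A B} (hget : K₁.get = K₂.get)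
    (hput : ∀ (X : A) (u : Out (K₁.get.obj X)) (h : K₁.get.obj X = K₂.get.obj X),
      K₁.put X u = K₂.put X (Out.cast h u)) : K₁ = K₂ := by
  rcases K₁ with ⟨get, put₁, _, _, _⟩
  rcases K₂ with ⟨get₂, put₂, _, _, _⟩
  obtain rfl : get = get₂ := hget
  obtain rfl : put₁ = put₂ := funext fun X => funext fun u => by simpa using hput X u rfl
  rfl

end DLens

universe v

namespace Cat

/-- `ULiftHom` moves the morphisms of `Codiscrete α` into the universe `v` of `Cat.{v, u}`. -/
abbrev toCodiscrete {B : Cat.{v, u}} {α : Type u} (f : B → α) :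
    B ⟶ Cat.of (ULiftHom.{v} (Codiscrete α)) :=
  (Codiscrete.functor f ⋙ ULiftHom.up).toCatHom

variable {A B C : Cat.{v, u}} {f₁ f₂ : A ⟶ B} {e : B ⟶ C} {w : f₁ ≫ e = f₂ ≫ e}

theorem obj_cancel_of_isColimit (hc : IsColimit (Cofork.ofπ e w)) {α : Type u}
    {g₁ g₂ : C → α} (h : g₁ ∘ e.toFunctor.obj = g₂ ∘ e.toFunctor.obj) : g₁ = g₂ := by
  have : toCodiscrete g₁ = toCodiscrete g₂ :=
    Cofork.IsColimit.hom_ext hc (congrArg (toCodiscrete (B := B)) h)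
  exact funext fun Y =>
    congrArg Codiscrete.as (Functor.congr_obj (congrArg Cat.Hom.toFunctor this) Y)

theorem surjective_obj_of_isColimit (hc : IsColimit (Cofork.ofπ e w)) :
    Function.Surjective e.toFunctor.obj :=
  Function.surjective_of_right_cancellable_Prop fun g₁ g₂ h => funext fun Y =>
    congrArg ULift.down (congrFun (obj_cancel_of_isColimit hc (g₁ := ULift.up.{u} ∘ g₁)
      (g₂ := ULift.up.{u} ∘ g₂) (congrArg (ULift.up ∘ ·) h)) Y)

theorem eqvGen_of_isColimit (hc : IsColimit (Cofork.ofπ e w)) {X X' : B}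
    (h : e.toFunctor.obj X = e.toFunctor.obj X') :
    Relation.EqvGen (Function.Coequalizer.Rel f₁.toFunctor.obj f₂.toFunctor.obj) X X' := by
  let q := Function.Coequalizer.mk f₁.toFunctor.obj f₂.toFunctor.obj
  have hq : f₁ ≫ toCodiscrete q = f₂ ≫ toCodiscrete q :=
    congrArg toCodiscrete (funext (Function.Coequalizer.condition _ _))
  have hfac : e ≫ hc.desc (Cofork.ofπ _ hq) = toCodiscrete q := Cofork.IsColimit.π_desc hc
  have hqe : ∀ X, q X = ((hc.desc (Cofork.ofπ _ hq)).toFunctor.obj (e.toFunctor.obj X)).as :=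
    fun X => congrArg Codiscrete.as (Functor.congr_obj (congrArg Cat.Hom.toFunctor hfac) X).symm
  exact Quot.eqvGen_exact ((hqe X).trans (h ▸ (hqe X').symm))

end Cat

section PutsAgree

variable {A : Type*} [Category A] {B : Type*} [Category B] {C : Type*} [Category C]
  {D : Type*} [Category D]

def PutsAgree (G : DLens B D) (e : B ⥤ C) (X X' : B) : Prop :=
  ∃ (hE : e.obj X = e.obj X') (hG : G.get.obj X = G.get.obj X'),
    ∀ u, Out.cast hE (mapOut e (G.put X u)) = mapOut e (G.put X' (Out.cast hG u))

theorem PutsAgree.equivalence (G : DLens B D) (e : B ⥤ C) : Equivalence (PutsAgree G e) where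
  refl X := ⟨rfl, rfl, fun u => by rw [Out.cast_self, Out.cast_self]⟩
  symm := by
    rintro X X' ⟨hE, hG, hput⟩
    refine ⟨hE.symm, hG.symm, fun u' => ?_⟩
    obtain ⟨u, rfl⟩ := Out.cast_surjective hG u'
    rw [← hput, Out.cast_cast, Out.cast_cast, Out.cast_self, Out.cast_self]
  trans := by
    rintro X X' X'' ⟨hE, hG, hput⟩ ⟨hE', hG', hput'⟩
    refine ⟨hE.trans hE', hG.trans hG', fun u => ?_⟩
    rw [← Out.cast_cast hE hE', hput, hput', Out.cast_cast]

/-- The puts of `G` at `F₁ a` and `F₂ a` both come from the put of `F₁ ≫ G = F₂ ≫ G` at `a`. -/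
theorem putsAgree_of_comp_eq (F₁ F₂ : DLens A B) (G : DLens B D) (e : B ⥤ C)
    (hE : F₁.get ⋙ e = F₂.get ⋙ e) (hG : F₁.comp G = F₂.comp G) (a : A) :
    PutsAgree G e (F₁.get.obj a) (F₂.get.obj a) := by
  have hGa : G.get.obj (F₁.get.obj a) = G.get.obj (F₂.get.obj a) :=
    Functor.congr_obj (congrArg DLens.get hG) a
  refine ⟨Functor.congr_obj hE a, hGa, fun u => ?_⟩
  have h₂ : G.put (F₂.get.obj a) (Out.cast hGa u) = mapOut F₂.get ((F₁.comp G).put a u) := by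
    rw [DLens.put_congr hG a u hGa]
    exact (F₂.putGet a _).symm
  rw [← F₁.putGet a (G.put _ u), h₂]
  exact mapOut_congr hE _ _

end PutsAgree

namespace DLens

variable {B : Type*} [Category B] {C : Type*} [Category C] {D : Type*} [Category D]

def IsPutImage (G : DLens B D) (e : B ⥤ C) (L : DLens C D) : Prop :=
  ∀ (X : B) (u : Out (G.get.obj X)) (h : G.get.obj X = L.get.obj (e.obj X)),
    L.put (e.obj X) (Out.cast h u) = mapOut e (G.put X u)

theorem eq_of_isPutImage {G : DLens B D} {e : B ⥤ C} (he : Function.Surjective e.obj)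
    {L₁ L₂ : DLens C D} (hL₁ : e ⋙ L₁.get = G.get) (hget : L₁.get = L₂.get)
    (h₁ : IsPutImage G e L₁) (h₂ : IsPutImage G e L₂) : L₁ = L₂ := by
  refine ext_put hget fun Y u hY => ?_
  obtain ⟨X, rfl⟩ := he Y
  obtain ⟨u, rfl⟩ := Out.cast_surjective (Functor.congr_obj hL₁ X).symm u
  rw [h₁, Out.cast_cast, h₂]

variable (G : DLens B D) {e : B ⥤ C} {H : C ⥤ D} (hH : e ⋙ H = G.get)
  (he : Function.Surjective e.obj)

noncomputable def descendPut (Y : C) (u : Out (H.obj Y)) : Out Y :=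
  Out.cast (he Y).choose_spec (mapOut e (G.put (he Y).choose
    (Out.cast ((congrArg H.obj (he Y).choose_spec).symm.trans (Functor.congr_obj hH _)) u)))

theorem descendPut_obj (hagree : ∀ X X', e.obj X = e.obj X' → PutsAgree G e X X') (X : B)
    (u : Out (G.get.obj X)) (h : G.get.obj X = H.obj (e.obj X)) :
    descendPut G hH he (e.obj X) (Out.cast h u) = mapOut e (G.put X u) := by
  obtain ⟨hE, hG, hput⟩ := hagree _ X (he (e.obj X)).choose_spec
  rw [descendPut, hput, Out.cast_cast, Out.cast_cast, Out.cast_self]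

noncomputable def descend (hagree : ∀ X X', e.obj X = e.obj X' → PutsAgree G e X X') :
    DLens C D where
  get := H
  put := descendPut G hH he
  putGet Y u := by
    obtain ⟨X, rfl⟩ := he Y
    have h : G.get.obj X = H.obj (e.obj X) := (Functor.congr_obj hH X).symm
    obtain ⟨u, rfl⟩ := Out.cast_surjective h u
    rw [descendPut_obj G hH he hagree]
    conv_rhs => rw [← G.putGet X u]
    exact (mapOut_congr hH.symm _ h).symm
  putId Y := by
    obtain ⟨X, rfl⟩ := he Y
    have h : G.get.obj X = H.obj (e.obj X) := (Functor.congr_obj hH X).symm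
    rw [← Out.cast_id h, descendPut_obj G hH he hagree, G.putId, mapOut_id]
  putPut Y u v hcmp := by
    obtain ⟨X, rfl⟩ := he Y
    have h : G.get.obj X = H.obj (e.obj X) := (Functor.congr_obj hH X).symm
    obtain ⟨u, rfl⟩ := Out.cast_surjective h u
    generalize hP : descendPut G hH he (e.obj X) (Out.cast h u) = P at hcmp ⊢
    rw [descendPut_obj G hH he hagree] at hP
    subst hP
    have h₁ : u.1 = G.get.obj (G.put X u).1 := (congrArg Sigma.fst (G.putGet X u)).symm
    have hv : Out.cast hcmp v = Out.cast (Functor.congr_obj hH _).symm (Out.cast h₁ v) :=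
      (Out.cast_cast h₁ _ v).symm
    rw [← Out.cast_comp h u v, descendPut_obj G hH he hagree, G.putPut X u v h₁, mapOut_comp, hv]
    exact congrArg (Out.comp _) (descendPut_obj G hH he hagree _ _ _).symm

theorem descend_isPutImage (hagree : ∀ X X', e.obj X = e.obj X' → PutsAgree G e X X') :
    IsPutImage G e (descend G hH he hagree) :=
  descendPut_obj G hH he hagree

end DLens

end LensPaper
open CategoryTheory CategoryTheory.Limits LensPaper

theorem comparison_lens_general (A B C D : LensCat.{u}) (F1 F2 : A ⟶ B) (E : B ⟶ C)
    (wU : lensForget.map F1 ≫ lensForget.map E = lensForget.map F2 ≫ lensForget.map E)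
    (hUE : IsColimit (Cofork.ofπ (lensForget.map E) wU))
    (G : B ⟶ D) (wG : F1 ≫ G = F2 ≫ G)
    (H : C.toCat ⟶ D.toCat) (hH : lensForget.map E ≫ H = lensForget.map G) :
    ∃! L : C ⟶ D, DLens.get L = H.toFunctor ∧
      ∀ (X : B.toCat) (u : Out ((DLens.get G).obj X))
        (h : (DLens.get G).obj X = (DLens.get L).obj ((DLens.get E).obj X)),
        DLens.put L ((DLens.get E).obj X) (Out.cast h u) =
          mapOut (DLens.get E) (DLens.put G X u) := by
  have hEH : DLens.get E ⋙ H.toFunctor = DLens.get G := congrArg Cat.Hom.toFunctor hH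
  have he := Cat.surjective_obj_of_isColimit hUE
  have hagree (X X' : B.toCat) (h : (DLens.get E).obj X = (DLens.get E).obj X') :
      PutsAgree G (DLens.get E) X X' := by
    refine (PutsAgree.equivalence G _).eqvGen_iff.mp
      (Relation.EqvGen.mono ?_ X X' (Cat.eqvGen_of_isColimit hUE h))
    rintro _ _ ⟨a⟩
    exact putsAgree_of_comp_eq F1 F2 G _ (congrArg Cat.Hom.toFunctor wU) wG a
  refine ⟨DLens.descend G hEH he hagree, ⟨rfl, DLens.descend_isPutImage G hEH he hagree⟩, ?_⟩
  rintro L ⟨hget, hput⟩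
  exact DLens.eq_of_isPutImage he (hget ▸ hEH) hget hput
    (DLens.descend_isPutImage G hEH he hagree)

/-- Let `F1, F2 : A ⟶ B` be lenses, `E : B ⟶ C` a cofork of them
in `Lens` whose get functor coequalises `U F1` and `U F2` in `Cat`. Let
`G : B ⟶ D` be a lens coforking `F1` and `F2`, and let `H : C ⟶ D` be the unique
functor with `U G = H ∘ U E`. Then there is a unique lens structure on `H`
satisfying `φ_{H,E X} d = E (φ_{G,X} d)` for every object `X` of `B` and every
morphism `d` out of `G X`. -/
theorem comparison_lens (A B C D : LensCat.{u}) (F1 F2 : A ⟶ B) (E : B ⟶ C)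
    (w : F1 ≫ E = F2 ≫ E)
    (wU : lensForget.map F1 ≫ lensForget.map E = lensForget.map F2 ≫ lensForget.map E)
    (hUE : IsColimit (Cofork.ofπ (lensForget.map E) wU))
    (G : B ⟶ D) (wG : F1 ≫ G = F2 ≫ G)
    (H : C.toCat ⟶ D.toCat) (hH : lensForget.map E ≫ H = lensForget.map G) :
    ∃! L : C ⟶ D, DLens.get L = H.toFunctor ∧
      ∀ (X : B.toCat) (u : Out ((DLens.get G).obj X))
        (h : (DLens.get G).obj X = (DLens.get L).obj ((DLens.get E).obj X)),
        DLens.put L ((DLens.get E).obj X) (Out.cast h u) =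
          mapOut (DLens.get E) (DLens.put G X u) :=
  comparison_lens_general A B C D F1 F2 E wU hUE G wG H hH
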